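/- For the root system of type C_n with simple system Δ = {e_{i+1} − e_i : i ∈ [n−1]} ∪ {2e_1}, the heights of positive roots are ht(e_j − e_i) = j − i for i < j and ht(e_i + e_j) = i + j − 1 for i ≤ j. Consequently, for a signed permutation σ ∈ B_n, L_{Φ(Δ)}(σ) = nneg(σ) + oinv(σ) + ensp(σ), where nneg(σ) = |{i ∈ [n] : σ(i) < 0}|, oinv(σ) = |{(i,j) : i < j, σ(i) > σ(j), j − i odd}|, and ensp(σ) = |{(i,j) : i < j, σ(i) + σ(j) < 0, j − i even}|. -/

import Mathlib

open Finset

/-- The hyperoctahedral group `B_n` of signed permutations, encoded as a pair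
consisting of the underlying permutation of positions and the signs of the entries. -/
abbrev BG (n : ℕ) := Equiv.Perm (Fin n) × (Fin n → Bool)

/-- The window notation value `σ(i)` (1-based values, 0-based positions). -/
def wval {n : ℕ} (σ : BG n) (i : Fin n) : ℤ :=
  (if σ.2 i then -1 else 1) * ((σ.1 i : ℤ) + 1)

def pairsF (n : ℕ) : Finset (Fin n × Fin n) := univ.filter fun p => p.1 < p.2

/-- number of inversions -/
def invB {n : ℕ} (σ : BG n) : ℕ :=
  ((pairsF n).filter fun p => wval σ p.2 < wval σ p.1).card

/-- number of odd inversions -/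
def oinvB {n : ℕ} (σ : BG n) : ℕ :=
  ((pairsF n).filter fun p => wval σ p.2 < wval σ p.1 ∧ (p.2.val - p.1.val) % 2 = 1).card

/-- number of even inversions -/
def einvB {n : ℕ} (σ : BG n) : ℕ :=
  ((pairsF n).filter fun p => wval σ p.2 < wval σ p.1 ∧ (p.2.val - p.1.val) % 2 = 0).card

/-- number of negative sum pairs -/
def nspB {n : ℕ} (σ : BG n) : ℕ :=
  ((pairsF n).filter fun p => wval σ p.1 + wval σ p.2 < 0).card

/-- number of odd negative sum pairs -/
def onspB {n : ℕ} (σ : BG n) : ℕ :=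
  ((pairsF n).filter fun p => wval σ p.1 + wval σ p.2 < 0 ∧ (p.2.val - p.1.val) % 2 = 1).card

/-- number of even negative sum pairs -/
def enspB {n : ℕ} (σ : BG n) : ℕ :=
  ((pairsF n).filter fun p => wval σ p.1 + wval σ p.2 < 0 ∧ (p.2.val - p.1.val) % 2 = 0).card

/-- number of negative entries -/
def nnegB {n : ℕ} (σ : BG n) : ℕ :=
  (univ.filter fun i : Fin n => wval σ i < 0).card

/-- number of negative entries in odd (1-based) positions -/
def onegB {n : ℕ} (σ : BG n) : ℕ :=
  (univ.filter fun i : Fin n => wval σ i < 0 ∧ (i.val + 1) % 2 = 1).card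

/-- number of negative entries in even (1-based) positions -/
def enegB {n : ℕ} (σ : BG n) : ℕ :=
  (univ.filter fun i : Fin n => wval σ i < 0 ∧ (i.val + 1) % 2 = 0).card

/-- Coxeter length of type B -/
def lenB {n : ℕ} (σ : BG n) : ℕ := invB σ + nnegB σ + nspB σ

/-- Coxeter length of type D -/
def lenD {n : ℕ} (σ : BG n) : ℕ := invB σ + nspB σ

/-- the standard basis vector `e_i` of `ℝ^n` -/
def ee {n : ℕ} (i : Fin n) : Fin n → ℝ := fun j => if j = i then 1 else 0

/-- the action of a signed permutation on `ℝ^n`, with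
`σ(e_i) = sign(σ(i)) e_{|σ(i)|}` -/
def actBG {n : ℕ} (σ : BG n) (v : Fin n → ℝ) : Fin n → ℝ :=
  fun j => (if σ.2 (σ.1.symm j) then -1 else 1) * v (σ.1.symm j)

/-- the simple system of type `C_n`: `2e_1` together with `e_{i+1} - e_i` -/
def deltaC (m : ℕ) : Fin (m + 1) → (Fin (m + 1) → ℝ) := fun k =>
  if k.val = 0 then (2 : ℝ) • ee 0
  else ee k - ee ⟨k.val - 1, Nat.lt_of_le_of_lt (Nat.sub_le _ _) k.isLt⟩

/-- positive roots of type `C`: `e_j - e_i` for `i < j` and `e_i + e_j` for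
`i ≤ j` (the latter includes `2e_i`) -/
def posC (n : ℕ) : Set (Fin n → ℝ) :=
  {v | (∃ i j : Fin n, i < j ∧ v = ee j - ee i) ∨
    (∃ i j : Fin n, i ≤ j ∧ v = ee i + ee j)}

/-- negative roots of type `C` -/
def negC (n : ℕ) : Set (Fin n → ℝ) := {v | -v ∈ posC n}

/-- `v` has odd height with respect to the type `C` simple system -/
def OddHtC (m : ℕ) (v : Fin (m + 1) → ℝ) : Prop :=
  ∀ c : Fin (m + 1) → ℝ, v = ∑ k, c k • deltaC m k → ∃ t : ℤ, Odd t ∧ ∑ k, c k = (t : ℝ)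

/-- the odd length: the number of positive roots of odd height sent to negative
roots -/
noncomputable def LC (m : ℕ) (σ : BG (m + 1)) : ℕ :=
  Set.ncard {v | v ∈ posC (m + 1) ∧ OddHtC m v ∧ actBG σ v ∈ negC (m + 1)}

namespace CAux

variable {n : ℕ}

lemma ee_apply (i j : Fin n) : ee i j = if j = i then (1:ℝ) else 0 := rfl

lemma ee_inj {a b : Fin n} (h : ee a = ee b) : a = b := by
  by_contra hne
  have := congrFun h a
  simp [ee, hne] at this

lemma diff_ne_sum {a b c d : Fin n} (hab : a ≠ b) :
    ee b - ee a ≠ ee c + ee d := by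
  intro h
  have := congrFun h a
  simp only [ee, Pi.sub_apply, Pi.add_apply] at this
  split_ifs at this <;> norm_num at this <;> exact hab (by simp_all)

lemma diff_eq_diff {a b c d : Fin n} (hab : a ≠ b) (hcd : c ≠ d)
    (h : ee b - ee a = ee d - ee c) : a = c ∧ b = d := by
  have hb := congrFun h b
  have ha := congrFun h a
  simp only [ee, Pi.sub_apply] at hb ha
  split_ifs at hb ha <;> simp_all <;> norm_num at ha

lemma sum_eq_sum {a b c d : Fin n} (hab : a ≤ b) (hcd : c ≤ d)
    (h : ee a + ee b = ee c + ee d) : a = c ∧ b = d := by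
  by_cases hbd : b = d
  · subst hbd
    exact ⟨ee_inj (add_right_cancel h), rfl⟩
  · exfalso
    have hda : d = a := by
      by_contra hda
      have hd := congrFun h d
      simp [ee, Ne.symm hbd, hda] at hd
      split_ifs at hd <;> norm_num at hd
    have hba : b ≠ a := fun hh => hbd (hh.trans hda.symm)
    have hbc : b = c := by
      by_contra hbc
      have hb := congrFun h b
      simp [ee, hba, hbc, hbd] at hb
    exact hbd (le_antisymm (by rw [hbc]; exact hcd) (by rw [hda]; exact hab))

lemma not_pos {v : Fin n → ℝ} (hv : ∀ l, v l ≤ 0) : v ∉ posC n := by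
  rintro (⟨i, j, hij, rfl⟩ | ⟨i, j, hij, rfl⟩)
  · have := hv j
    have hji : j ≠ i := (Fin.ne_of_lt hij).symm
    simp [ee, hji] at this
    linarith
  · have := hv j
    simp only [ee, Pi.add_apply] at this
    split_ifs at this <;> linarith

lemma diff_mem_posC {a b : Fin n} (hne : a ≠ b) :
    ee b - ee a ∈ posC n ↔ a < b := by
  constructor
  · rintro (⟨i, j, hij, h⟩ | ⟨i, j, hij, h⟩)
    · obtain ⟨rfl, rfl⟩ := diff_eq_diff hne (Fin.ne_of_lt hij) h
      exact hij
    · exact absurd h (diff_ne_sum hne)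
  · intro h
    exact Or.inl ⟨a, b, h, rfl⟩

lemma sum_mem_posC (a b : Fin n) : ee a + ee b ∈ posC n := by
  rcases le_total a b with h | h
  · exact Or.inr ⟨a, b, h, rfl⟩
  · exact Or.inr ⟨b, a, h, by rw [add_comm]⟩

end CAux
namespace CAux

variable {n : ℕ}

lemma act_ee (σ : BG n) (i : Fin n) :
    actBG σ (ee i) = (if σ.2 i then (-1:ℝ) else 1) • ee (σ.1 i) := by
  funext j
  simp only [actBG, ee, Pi.smul_apply, smul_eq_mul]
  by_cases h : σ.1.symm j = i
  · have hj : j = σ.1 i := by rw [← h]; simp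
    simp [h, hj]
  · have hj : j ≠ σ.1 i := fun hh => h (by rw [hh]; simp)
    simp [h, hj]

lemma act_add (σ : BG n) (u v : Fin n → ℝ) :
    actBG σ (u + v) = actBG σ u + actBG σ v := by
  funext j; simp only [actBG, Pi.add_apply]; ring

lemma act_sub (σ : BG n) (u v : Fin n → ℝ) :
    actBG σ (u - v) = actBG σ u - actBG σ v := by
  funext j; simp only [actBG, Pi.sub_apply]; ring

lemma not_pos_negneg (a b : Fin n) : -ee a - ee b ∉ posC n := by
  apply not_pos
  intro l
  simp only [ee, Pi.sub_apply, Pi.neg_apply]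
  split_ifs <;> norm_num

lemma inv_char (σ : BG n) {i j : Fin n} (hij : i ≠ j) :
    actBG σ (ee j - ee i) ∈ negC n ↔ wval σ j < wval σ i := by
  have hs : σ.1 i ≠ σ.1 j := fun h => hij (σ.1.injective h)
  have hmem : actBG σ (ee j - ee i) ∈ negC n ↔
      (if σ.2 i then (-1:ℝ) else 1) • ee (σ.1 i)
        - (if σ.2 j then (-1:ℝ) else 1) • ee (σ.1 j) ∈ posC n := by
    rw [negC, Set.mem_setOf_eq, act_sub, act_ee, act_ee, neg_sub]
  rw [hmem]
  cases hi : σ.2 i <;> cases hj : σ.2 j <;>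
      simp only [wval, hi, hj, if_false, if_true, Bool.false_eq_true, one_smul,
        neg_smul, one_mul, neg_one_mul, sub_neg_eq_add]
  · rw [diff_mem_posC hs.symm, Fin.lt_def]
    omega
  · refine ⟨fun _ => ?_, fun _ => sum_mem_posC _ _⟩
    omega
  · refine ⟨fun h => absurd h (not_pos_negneg _ _), fun h => absurd h ?_⟩
    omega
  · rw [neg_add_eq_sub, diff_mem_posC hs, Fin.lt_def]
    omega

lemma nsp_char (σ : BG n) (i j : Fin n) :
    actBG σ (ee i + ee j) ∈ negC n ↔ wval σ i + wval σ j < 0 := by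
  have hmem : actBG σ (ee i + ee j) ∈ negC n ↔
      -((if σ.2 i then (-1:ℝ) else 1) • ee (σ.1 i))
        - (if σ.2 j then (-1:ℝ) else 1) • ee (σ.1 j) ∈ posC n := by
    rw [negC, Set.mem_setOf_eq, act_add, act_ee, act_ee, neg_add, ← sub_eq_add_neg]
  rw [hmem]
  cases hi : σ.2 i <;> cases hj : σ.2 j <;>
      simp only [wval, hi, hj, if_false, if_true, Bool.false_eq_true, one_smul,
        neg_smul, one_mul, neg_one_mul, sub_neg_eq_add, neg_neg]
  · refine ⟨fun h => absurd h (not_pos_negneg _ _), fun h => absurd h ?_⟩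
    omega
  · have hs : σ.1 i ≠ σ.1 j := by
      intro h
      have : i = j := σ.1.injective h
      rw [this, hj] at hi
      exact absurd hi (by simp)
    rw [neg_add_eq_sub, diff_mem_posC hs, Fin.lt_def]
    omega
  · have hs : σ.1 i ≠ σ.1 j := by
      intro h
      have : i = j := σ.1.injective h
      rw [this, hj] at hi
      exact absurd hi (by simp)
    rw [diff_mem_posC hs.symm, Fin.lt_def]
    omega
  · refine ⟨fun _ => ?_, fun _ => sum_mem_posC _ _⟩
    omega

end CAux
namespace CAux

/-- the height functional -/
noncomputable def htf (m : ℕ) (v : Fin (m + 1) → ℝ) : ℝ :=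
  ∑ t, ((t.val : ℝ) + 1 / 2) * v t

lemma htf_ee (m : ℕ) (a : Fin (m + 1)) : htf m (ee a) = (a.val : ℝ) + 1 / 2 := by
  simp [htf, ee, mul_ite]

lemma htf_add (m : ℕ) (u v : Fin (m + 1) → ℝ) :
    htf m (u + v) = htf m u + htf m v := by
  simp [htf, mul_add, Finset.sum_add_distrib]

lemma htf_sub (m : ℕ) (u v : Fin (m + 1) → ℝ) :
    htf m (u - v) = htf m u - htf m v := by
  simp [htf, mul_sub, Finset.sum_sub_distrib]

lemma htf_smul (m : ℕ) (c : ℝ) (v : Fin (m + 1) → ℝ) :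
    htf m (c • v) = c * htf m v := by
  rw [htf, htf, Finset.mul_sum]
  exact Finset.sum_congr rfl fun x _ => by simp [Pi.smul_apply]; ring

lemma htf_sum (m : ℕ) {ι : Type*} (s : Finset ι) (f : ι → Fin (m + 1) → ℝ) :
    htf m (∑ k ∈ s, f k) = ∑ k ∈ s, htf m (f k) := by
  simp only [htf, Finset.sum_apply, Finset.mul_sum]
  exact Finset.sum_comm

lemma htf_delta (m : ℕ) (k : Fin (m + 1)) : htf m (deltaC m k) = 1 := by
  by_cases hk : k.val = 0
  · rw [deltaC, if_pos hk, htf_smul, htf_ee]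
    norm_num
  · rw [deltaC, if_neg hk, htf_sub, htf_ee, htf_ee]
    have : (1:ℕ) ≤ k.val := Nat.one_le_iff_ne_zero.mpr hk
    push_cast [Nat.cast_sub this]
    ring

lemma height_eq (m : ℕ) (v : Fin (m + 1) → ℝ) (c : Fin (m + 1) → ℝ)
    (hc : v = ∑ k, c k • deltaC m k) : ∑ k, c k = htf m v := by
  rw [hc, htf_sum]
  simp [htf_smul, htf_delta]

lemma ee_mem_span (m : ℕ) (l : Fin (m + 1)) :
    ee l ∈ Submodule.span ℝ (Set.range (deltaC m)) := by
  induction l using Fin.induction with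
  | zero =>
      have h0 : ee (0 : Fin (m + 1)) = (2⁻¹ : ℝ) • deltaC m 0 := by
        rw [deltaC, if_pos (by simp), smul_smul]
        norm_num
      rw [h0]
      exact Submodule.smul_mem _ _ (Submodule.subset_span ⟨0, rfl⟩)
  | succ i ih =>
      have hd : deltaC m i.succ = ee i.succ - ee i.castSucc := by
        rw [deltaC, if_neg (by simp [Fin.val_succ])]
        congr 1
      have : ee i.succ = deltaC m i.succ + ee i.castSucc := by
        rw [hd, sub_add_cancel]
      rw [this]
      exact Submodule.add_mem _ (Submodule.subset_span ⟨_, rfl⟩) ih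

lemma decomp (m : ℕ) (v : Fin (m + 1) → ℝ) :
    ∃ c : Fin (m + 1) → ℝ, v = ∑ k, c k • deltaC m k := by
  have hv : v ∈ Submodule.span ℝ (Set.range (deltaC m)) := by
    have hrep : v = ∑ l, v l • ee l := by
      funext t
      simp [ee, Finset.sum_apply, mul_ite]
    rw [hrep]
    exact Submodule.sum_mem _ fun l _ => Submodule.smul_mem _ _ (ee_mem_span m l)
  obtain ⟨c, hc⟩ := (Submodule.mem_span_range_iff_exists_fun ℝ).mp hv
  exact ⟨c, hc.symm⟩

lemma oddHt_iff (m : ℕ) (v : Fin (m + 1) → ℝ) :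
    OddHtC m v ↔ ∃ t : ℤ, Odd t ∧ htf m v = (t : ℝ) := by
  constructor
  · intro h
    obtain ⟨c, hc⟩ := decomp m v
    obtain ⟨t, ht, hsum⟩ := h c hc
    exact ⟨t, ht, by rw [← height_eq m v c hc, hsum]⟩
  · rintro ⟨t, ht, hv⟩ c hc
    exact ⟨t, ht, by rw [height_eq m v c hc, hv]⟩

end CAux
namespace CAux

lemma oddHt_diff (m : ℕ) (a b : Fin (m + 1)) :
    OddHtC m (ee b - ee a) ↔ Odd ((b.val : ℤ) - (a.val : ℤ)) := by
  rw [oddHt_iff, htf_sub, htf_ee, htf_ee]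
  constructor
  · rintro ⟨t, ht, he⟩
    have h1 : (((b.val : ℤ) - (a.val : ℤ) : ℤ) : ℝ) = (t : ℝ) := by
      push_cast
      linarith [he]
    have h2 : (b.val : ℤ) - (a.val : ℤ) = t := by exact_mod_cast h1
    rwa [h2]
  · intro h
    exact ⟨(b.val : ℤ) - (a.val : ℤ), h, by push_cast; ring⟩

lemma oddHt_sum (m : ℕ) (a b : Fin (m + 1)) :
    OddHtC m (ee a + ee b) ↔ Odd ((a.val : ℤ) + (b.val : ℤ) + 1) := by
  rw [oddHt_iff, htf_add, htf_ee, htf_ee]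
  constructor
  · rintro ⟨t, ht, he⟩
    have h1 : (((a.val : ℤ) + (b.val : ℤ) + 1 : ℤ) : ℝ) = (t : ℝ) := by
      push_cast
      linarith [he]
    have h2 : (a.val : ℤ) + (b.val : ℤ) + 1 = t := by exact_mod_cast h1
    rwa [h2]
  · intro h
    exact ⟨(a.val : ℤ) + (b.val : ℤ) + 1, h, by push_cast; ring⟩

lemma main_count (m : ℕ) (σ : BG (m + 1)) :
    LC m σ = nnegB σ + oinvB σ + enspB σ := by
  classical
  set F1 : Finset (Fin (m + 1) → ℝ) :=
    (univ.filter fun i : Fin (m + 1) => wval σ i < 0).image (fun i => ee i + ee i) with hF1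
  set F2 : Finset (Fin (m + 1) → ℝ) :=
    ((pairsF (m + 1)).filter fun p => wval σ p.2 < wval σ p.1 ∧ (p.2.val - p.1.val) % 2 = 1).image
      (fun p => ee p.2 - ee p.1) with hF2
  set F3 : Finset (Fin (m + 1) → ℝ) :=
    ((pairsF (m + 1)).filter fun p => wval σ p.1 + wval σ p.2 < 0 ∧ (p.2.val - p.1.val) % 2 = 0).image
      (fun p => ee p.1 + ee p.2) with hF3
  have hset : {v | v ∈ posC (m + 1) ∧ OddHtC m v ∧ actBG σ v ∈ negC (m + 1)}
      = ↑(F1 ∪ F2 ∪ F3) := by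
    ext v
    simp only [Set.mem_setOf_eq, Finset.coe_union, Set.mem_union, Finset.mem_coe]
    constructor
    · rintro ⟨hpos, hodd, hneg⟩
      rcases hpos with ⟨i, j, hij, rfl⟩ | ⟨i, j, hij, rfl⟩
      · refine Or.inl (Or.inr ?_)
        rw [hF2, Finset.mem_image]
        refine ⟨(i, j), ?_, rfl⟩
        rw [Finset.mem_filter]
        have hw := (inv_char σ (Fin.ne_of_lt hij)).mp hneg
        have hlt : i.val < j.val := hij
        have hparity : (j.val - i.val) % 2 = 1 := by
          have hodd' := (oddHt_diff m i j).mp hodd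
          rw [Int.odd_iff] at hodd'
          omega
        exact ⟨by simp [pairsF, hij], hw, hparity⟩
      · rcases eq_or_lt_of_le hij with rfl | hlt
        · refine Or.inl (Or.inl ?_)
          rw [hF1, Finset.mem_image]
          refine ⟨i, ?_, rfl⟩
          have hw := (nsp_char σ i i).mp hneg
          simp only [Finset.mem_filter, Finset.mem_univ, true_and]
          omega
        · refine Or.inr ?_
          rw [hF3, Finset.mem_image]
          refine ⟨(i, j), ?_, rfl⟩
          rw [Finset.mem_filter]
          have hw := (nsp_char σ i j).mp hneg
          have hlt' : i.val < j.val := hlt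
          have hparity : (j.val - i.val) % 2 = 0 := by
            have hodd' := (oddHt_sum m i j).mp hodd
            rw [Int.odd_iff] at hodd'
            omega
          exact ⟨by simp [pairsF, hlt], hw, hparity⟩
    · rintro ((h | h) | h)
      · rw [hF1, Finset.mem_image] at h
        obtain ⟨i, hi, rfl⟩ := h
        simp only [Finset.mem_filter, Finset.mem_univ, true_and] at hi
        refine ⟨Or.inr ⟨i, i, le_refl _, rfl⟩, ?_, ?_⟩
        · rw [oddHt_sum, Int.odd_iff]
          omega
        · exact (nsp_char σ i i).mpr (by omega)
      · rw [hF2, Finset.mem_image] at h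
        obtain ⟨p, hp, rfl⟩ := h
        rw [Finset.mem_filter] at hp
        obtain ⟨hmem, hw, hpar⟩ := hp
        have hlt : p.1 < p.2 := by simpa [pairsF] using hmem
        have hlt' : p.1.val < p.2.val := hlt
        refine ⟨Or.inl ⟨p.1, p.2, hlt, rfl⟩, ?_, ?_⟩
        · rw [oddHt_diff, Int.odd_iff]
          omega
        · exact (inv_char σ (Fin.ne_of_lt hlt)).mpr hw
      · rw [hF3, Finset.mem_image] at h
        obtain ⟨p, hp, rfl⟩ := h
        rw [Finset.mem_filter] at hp
        obtain ⟨hmem, hw, hpar⟩ := hp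
        have hlt : p.1 < p.2 := by simpa [pairsF] using hmem
        have hlt' : p.1.val < p.2.val := hlt
        refine ⟨Or.inr ⟨p.1, p.2, le_of_lt hlt, rfl⟩, ?_, ?_⟩
        · rw [oddHt_sum, Int.odd_iff]
          omega
        · exact (nsp_char σ p.1 p.2).mpr hw
  have hp2 : ∀ v ∈ F2, ∃ a b : Fin (m + 1), a < b ∧ v = ee b - ee a := by
    intro v hv
    rw [hF2, Finset.mem_image] at hv
    obtain ⟨p, hp, rfl⟩ := hv
    rw [Finset.mem_filter] at hp
    exact ⟨p.1, p.2, by simpa [pairsF] using hp.1, rfl⟩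
  have hd12 : Disjoint F1 F2 := by
    rw [Finset.disjoint_right]
    intro v hv2 hv1
    obtain ⟨a, b, hab, rfl⟩ := hp2 v hv2
    rw [hF1, Finset.mem_image] at hv1
    obtain ⟨i, _, hi⟩ := hv1
    exact diff_ne_sum (Fin.ne_of_lt hab) hi.symm
  have hd123 : Disjoint (F1 ∪ F2) F3 := by
    rw [Finset.disjoint_left]
    intro v hv12 hv3
    rw [hF3, Finset.mem_image] at hv3
    obtain ⟨q, hq, hqe⟩ := hv3
    rw [Finset.mem_filter] at hq
    have hqlt : q.1 < q.2 := by simpa [pairsF] using hq.1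
    rcases Finset.mem_union.mp hv12 with hv1 | hv2
    · rw [hF1, Finset.mem_image] at hv1
      obtain ⟨i, _, hi⟩ := hv1
      obtain ⟨h1, h2⟩ := sum_eq_sum (le_refl i) (le_of_lt hqlt) (hi.trans hqe.symm)
      exact absurd (h1 ▸ h2 ▸ hqlt) (lt_irrefl _)
    · obtain ⟨a, b, hab, rfl⟩ := hp2 v hv2
      exact diff_ne_sum (Fin.ne_of_lt hab) hqe.symm
  have hc1 : F1.card = nnegB σ := by
    rw [hF1, Finset.card_image_of_injOn, nnegB]
    intro a _ b _ hab
    exact (sum_eq_sum (le_refl a) (le_refl b) hab).1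
  have hc2 : F2.card = oinvB σ := by
    rw [hF2, Finset.card_image_of_injOn, oinvB]
    intro p hp q hq hpq
    simp only [Finset.coe_filter, Set.mem_setOf_eq] at hp hq
    have hplt : p.1 < p.2 := by simpa [pairsF] using hp.1
    have hqlt : q.1 < q.2 := by simpa [pairsF] using hq.1
    obtain ⟨h1, h2⟩ := diff_eq_diff (Fin.ne_of_lt hplt) (Fin.ne_of_lt hqlt) hpq
    exact Prod.ext h1 h2
  have hc3 : F3.card = enspB σ := by
    rw [hF3, Finset.card_image_of_injOn, enspB]
    intro p hp q hq hpq
    simp only [Finset.coe_filter, Set.mem_setOf_eq] at hp hq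
    have hplt : p.1 < p.2 := by simpa [pairsF] using hp.1
    have hqlt : q.1 < q.2 := by simpa [pairsF] using hq.1
    obtain ⟨h1, h2⟩ := sum_eq_sum (le_of_lt hplt) (le_of_lt hqlt) hpq
    exact Prod.ext h1 h2
  unfold LC
  rw [hset, Set.ncard_coe_finset, Finset.card_union_of_disjoint hd123,
    Finset.card_union_of_disjoint hd12, hc1, hc2, hc3]

end CAux

theorem heights_and_oddLength_typeC (m : ℕ) :
    (∀ i j : Fin (m + 1), i < j →
      ∀ c : Fin (m + 1) → ℝ, ee j - ee i = ∑ k, c k • deltaC m k →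
        ∑ k, c k = (((j : ℕ) - (i : ℕ) : ℕ) : ℝ)) ∧
    (∀ i j : Fin (m + 1), i ≤ j →
      ∀ c : Fin (m + 1) → ℝ, ee i + ee j = ∑ k, c k • deltaC m k →
        ∑ k, c k = (((i : ℕ) + (j : ℕ) + 1 : ℕ) : ℝ)) ∧
    (∀ σ : BG (m + 1), LC m σ = nnegB σ + oinvB σ + enspB σ) := by
  refine ⟨?_, ?_, CAux.main_count m⟩
  · intro i j hij c hc
    rw [CAux.height_eq m (ee j - ee i) c hc, CAux.htf_sub, CAux.htf_ee, CAux.htf_ee,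
      Nat.cast_sub (le_of_lt hij)]
    ring
  · intro i j hij c hc
    rw [CAux.height_eq m (ee i + ee j) c hc, CAux.htf_add, CAux.htf_ee, CAux.htf_ee]
    push_cast
    ring
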